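/- arXiv:1207.0605 — 7 statements merged into one kernel-verified Lean document; each statement's English description precedes it below -/
import Mathlib

section
/- Let R be a commutative ring, M a commutative monoid, and T ⊆ M a subset. Then the monoid algebra R[M − T] of the monoid of differences of M with negatives in T, viewed as an R[M]-algebra via R[ε_T], is canonically isomorphic to the localization of R[M] at the multiplicative set exp_{R,M}(T) of images of elements of T. -/
/-!
Let `f : M → N` be the localization of `M` at an additive submonoid `S` (here the one generated
by `T`) and write `e_m` for `single m 1`. Every element of `R[N]` is a fraction `x / e_{f s}`
with `s ∈ S`: a monomial `r e_n` is one because `n + f s = f m` for some `m`, and such fractions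
are closed under sums. If `x, y ∈ R[M]` have the same image, finitely many pairs of support
elements are identified by `f`, so a single `s ∈ S` equalizes all of them; translating by `s`
makes `f` injective on the supports, whence `e_s x = e_s y`.
-/

open AddMonoidAlgebra

namespace AddSubmonoid.LocalizationMap

variable {M N : Type*} [AddCommMonoid M] [AddCommMonoid N] {S : AddSubmonoid M}

theorem exists_forall_add_eq_add_of_eq (f : S.LocalizationMap N) (P : Finset (M × M)) :
    ∃ s ∈ S, ∀ p ∈ P, f p.1 = f p.2 → s + p.1 = s + p.2 := by
  classical
  induction P using Finset.induction_on with
  | empty => exact ⟨0, S.zero_mem, by simp⟩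
  | insert p P _ ih =>
    obtain ⟨s, hs, hP⟩ := ih
    obtain ⟨c, hc⟩ : ∃ c : S, f p.1 = f p.2 → c + p.1 = c + p.2 := by
      by_cases h : f p.1 = f p.2
      · exact (f.exists_of_eq h).imp fun _ hc _ => hc
      · exact ⟨0, fun h' => absurd h' h⟩
    refine ⟨c + s, S.add_mem c.2 hs, fun q hq hfq => ?_⟩
    rcases Finset.mem_insert.mp hq with rfl | hq
    · rw [add_right_comm, add_right_comm _ s, hc hfq]
    · rw [add_assoc, add_assoc, hP q hq hfq]

theorem exists_injOn_image_add (f : S.LocalizationMap N) (F : Finset M) :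
    ∃ s ∈ S, Set.InjOn f ((s + ·) '' F) := by
  obtain ⟨s, hs, h⟩ := f.exists_forall_add_eq_add_of_eq (F ×ˢ F)
  refine ⟨s, hs, ?_⟩
  rintro _ ⟨a, ha, rfl⟩ _ ⟨b, hb, rfl⟩ hab
  rw [map_add, map_add, (f.map_addUnits ⟨s, hs⟩).add_right_inj] at hab
  exact h (a, b) (Finset.mem_product.2 ⟨ha, hb⟩) hab

end AddSubmonoid.LocalizationMap

namespace AddMonoidAlgebra

theorem isUnit_single_one_of_isAddUnit {R N : Type*} [Semiring R] [AddMonoid N] {a : N}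
    (ha : IsAddUnit a) : IsUnit (single a (1 : R)) := by
  obtain ⟨u, rfl⟩ := ha
  exact ⟨⟨single u 1, single ↑(-u) 1, by simp [one_def], by simp [one_def]⟩, rfl⟩

theorem single_one_mul_eq_mapDomain {R M : Type*} [Semiring R] [AddMonoid M] (m : M) (x : R[M]) :
    single m 1 * x = mapDomain (m + ·) x := by
  induction x using AddMonoidAlgebra.induction with
  | zero => simp
  | single_add a r x _ _ ih =>
    rw [mul_add, ih, mapDomain_add, mapDomain_single, single_mul_single, one_mul]

variable {R M N : Type*} [CommSemiring R] [AddCommMonoid M] [AddCommMonoid N] {S : AddSubmonoid M}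

variable (R) in
noncomputable def ofSubmonoid (S : AddSubmonoid M) : Submonoid R[M] :=
  (AddSubmonoid.toSubmonoid S).map (of R M)

theorem mem_ofSubmonoid {x : R[M]} : x ∈ ofSubmonoid R S ↔ ∃ s ∈ S, single s 1 = x :=
  Iff.rfl

theorem ofSubmonoid_closure (T : Set M) :
    ofSubmonoid R (AddSubmonoid.closure T) =
      Submonoid.closure ((fun t => single t (1 : R)) '' T) := by
  rw [ofSubmonoid, AddSubmonoid.toSubmonoid_closure, MonoidHom.map_mclosure]
  congr 1

theorem exists_mul_single_eq_mapDomain (f : S.LocalizationMap N) (z : R[N]) :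
    ∃ x : R[M], ∃ s ∈ S, z * single (f s) 1 = mapDomain f x := by
  induction z using AddMonoidAlgebra.induction with
  | zero => exact ⟨0, 0, S.zero_mem, by simp⟩
  | single_add n r z _ _ ih =>
    obtain ⟨x, s, hs, hx⟩ := ih
    obtain ⟨⟨m, t⟩, hmt⟩ := f.surj n
    refine ⟨single m r * single s 1 + x * single (t : M) 1, t + s, S.add_mem t.2 hs, ?_⟩
    have hn : single n r * single (f t) 1 = mapDomain f (single m r) := by
      rw [single_mul_single, mul_one, mapDomain_single, hmt]
    have hts : single (f (t + s)) (1 : R) = single (f t) 1 * single (f s) 1 := by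
      rw [single_mul_single, one_mul, map_add]
    calc (single n r + z) * single (f (t + s)) 1
        = single n r * single (f t) 1 * single (f s) 1 + z * single (f s) 1 * single (f t) 1 := by
          rw [hts]; ring
      _ = mapDomain f (single m r * single s 1 + x * single (t : M) 1) := by
          simp only [hn, hx, mapDomain_add, mapDomain_mul, mapDomain_single]

theorem exists_single_mul_eq_of_mapDomain_eq (f : S.LocalizationMap N) {x y : R[M]}
    (h : mapDomain f x = mapDomain f y) : ∃ s ∈ S, single s 1 * x = single s 1 * y := by
  classical
  set F := x.coeff.support ∪ y.coeff.support
  obtain ⟨s, hs, hinj⟩ := f.exists_injOn_image_add F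
  refine ⟨s, hs, ?_⟩
  have hcomp : f ∘ (s + ·) = (f s + ·) ∘ f := funext (map_add f s)
  have hsupp (w : R[M]) (hw : w.coeff.support ⊆ F) :
      ↑(Finsupp.mapDomain (s + ·) w.coeff).support ⊆ (s + ·) '' (F : Set M) := by
    rw [← Finset.coe_image]
    exact Finset.coe_subset.2 (Finsupp.mapDomain_support.trans (Finset.image_subset_image hw))
  rw [single_one_mul_eq_mapDomain, single_one_mul_eq_mapDomain]
  apply coeff_injective
  refine Finsupp.mapDomain_injOn _ hinj (hsupp x Finset.subset_union_left)
    (hsupp y Finset.subset_union_right) ?_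
  have := congrArg (fun w : R[N] => Finsupp.mapDomain (f s + ·) w.coeff) h
  simpa only [coeff_mapDomain, ← Finsupp.mapDomain_comp, ← hcomp] using this

theorem isLocalization_ofSubmonoid (f : S.LocalizationMap N) :
    letI := (mapDomainRingHom R f.toAddMonoidHom).toAlgebra
    IsLocalization (ofSubmonoid R S) R[N] := by
  let := (mapDomainRingHom R f.toAddMonoidHom).toAlgebra
  have hf (x : R[M]) : algebraMap R[M] R[N] x = mapDomain f x := rfl
  refine ⟨?_, fun z => ?_, fun {x y} h => ?_⟩
  · rintro ⟨_, hx⟩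
    obtain ⟨s, hs, rfl⟩ := mem_ofSubmonoid.1 hx
    rw [hf, mapDomain_single]
    exact isUnit_single_one_of_isAddUnit (f.map_addUnits ⟨s, hs⟩)
  · obtain ⟨x, s, hs, hx⟩ := exists_mul_single_eq_mapDomain f z
    refine ⟨(x, ⟨single s 1, mem_ofSubmonoid.2 ⟨s, hs, rfl⟩⟩), ?_⟩
    rwa [hf, hf, mapDomain_single]
  · rw [hf, hf] at h
    obtain ⟨s, hs, hxy⟩ := exists_single_mul_eq_of_mapDomain_eq f h
    exact ⟨⟨single s 1, mem_ofSubmonoid.2 ⟨s, hs, rfl⟩⟩, hxy⟩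

end AddMonoidAlgebra

/-- Let `R` be a commutative ring, `M` a commutative monoid and `T ⊆ M`.
Then the monoid algebra `R[M − T]` of the monoid of differences of `M` with
negatives in `T` (i.e. the localization of `M` at the submonoid generated by `T`),
viewed as an `R[M]`-algebra via `R[ε_T]`, is the localization of `R[M]` at the
multiplicative set generated by the elements `e_t = exp_{R,M}(t)` for `t ∈ T`. -/
theorem monoidAlgebra_diff_isLocalization (R : Type*) [CommRing R]
    (M : Type*) [AddCommMonoid M] (T : Set M) :
    letI S' : AddSubmonoid M := AddSubmonoid.closure T
    letI : Algebra (AddMonoidAlgebra R M) (AddMonoidAlgebra R (AddLocalization S')) :=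
      (AddMonoidAlgebra.mapDomainRingHom R
        ((AddLocalization.addMonoidOf S').toAddMonoidHom)).toAlgebra
    IsLocalization
      (Submonoid.closure ((fun t => AddMonoidAlgebra.single t (1 : R)) '' T))
      (AddMonoidAlgebra R (AddLocalization S')) := by
  rw [← ofSubmonoid_closure]
  exact isLocalization_ofSubmonoid _
end

section
/- Let R be a nonzero commutative ring and M a commutative monoid. If the R-algebra R[M] is of finite type, then the monoid M is finitely generated; conversely, if M is finitely generated then R[M] is an R-algebra of finite presentation. -/
/-!
For finitely generated `M` the integral monoid algebra `ℤ[M]` is of finite type over the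
noetherian ring `ℤ`, hence finitely presented, and `R[M] ≃ R ⊗[ℤ] ℤ[M]` inherits finite
presentation by base change.
-/

theorem AddMonoidAlgebra.finitePresentation_of_fg (R : Type*) [CommRing R]
    (M : Type*) [AddCommMonoid M] [AddMonoid.FG M] :
    Algebra.FinitePresentation R (AddMonoidAlgebra R M) :=
  have : Algebra.FinitePresentation ℤ (AddMonoidAlgebra ℤ M) :=
    Algebra.FinitePresentation.of_finiteType.mp (finiteType_of_fg ℤ M)
  Algebra.FinitePresentation.equiv (scalarTensorEquiv ℤ R)

/-- Let `R` be a nonzero commutative ring and `M` a commutative monoid.  If the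
`R`-algebra `R[M]` is of finite type then `M` is finitely generated; conversely, if
`M` is finitely generated then `R[M]` is an `R`-algebra of finite presentation. -/
theorem monoidAlgebra_finiteType_fg (R : Type*) [CommRing R] [Nontrivial R]
    (M : Type*) [AddCommMonoid M] :
    (Algebra.FiniteType R (AddMonoidAlgebra R M) → AddMonoid.FG M) ∧
      (AddMonoid.FG M → Algebra.FinitePresentation R (AddMonoidAlgebra R M)) :=
  ⟨AddMonoidAlgebra.finiteType_iff_fg.mp, fun _ => AddMonoidAlgebra.finitePresentation_of_fg R M⟩
end

section
/- Let R be a commutative ring and M a commutative monoid. The ring R[M] is noetherian if and only if R is noetherian and M is finitely generated. -/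
/-!
A congruence `c` on `M` is recovered from the kernel of `R[M] → R[M/c]` (look at the elements
`x - y`), so if `R[M]` is noetherian then `M` has the ascending chain condition on congruences.
Such a monoid is finitely generated. By noetherian induction on congruences we may assume that
every proper quotient of `M` is finitely generated. Rees congruences give the ascending chain
condition on ideals, hence finite bases and minimal elements for divisibility. The congruence
`x ~ y ↔ u + x = u + y` shows that `u + M` lies in a finitely generated submonoid whenever `u` is
not cancellable, and orbit congruences of subgroups of units show that the unit group is finitely
generated. Let `N` be a finitely generated submonoid containing the units and the non-cancellable
elements, and suppose `a ∉ N`. The Rees quotient by `a + M` gives a finite `G` with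
`M = ⟨G⟩ ∪ (a + M)`. An element `b = a + t` that is minimal outside `⟨N, G, a⟩` divides `t`, so
`b + (a + d) = b`; since `b` is cancellable, `a` is a unit, a contradiction.

The converse is the Hilbert basis theorem: `R[M]` is a finitely generated `R`-algebra.
-/

open Set Pointwise AddSubmonoid AddMonoidAlgebra

section Monoid

variable {S : Type*} [AddCommMonoid S]

theorem add_mem_add_univ {P : Set S} {x : S} (hx : x ∈ P + univ) (z : S) : x + z ∈ P + univ := by
  obtain ⟨p, hp, s, -, rfl⟩ := hx
  exact ⟨p, hp, s + z, trivial, (add_assoc p s z).symm⟩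

/-- The Rees congruence of the ideal `P + univ` generated by `P`. -/
def reesCon (P : Set S) : AddCon S where
  r x y := x = y ∨ (x ∈ P + univ ∧ y ∈ P + univ)
  iseqv := by
    refine ⟨fun x => Or.inl rfl, ?_, ?_⟩
    · rintro x y (rfl | ⟨hx, hy⟩)
      exacts [Or.inl rfl, Or.inr ⟨hy, hx⟩]
    · rintro x y z (rfl | ⟨hx, hy⟩) (rfl | ⟨hy', hz⟩)
      exacts [Or.inl rfl, Or.inr ⟨hy', hz⟩, Or.inr ⟨hx, hy⟩, Or.inr ⟨hx, hz⟩]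
  add' := by
    rintro w x y z (rfl | ⟨hw, hx⟩) (rfl | ⟨hy, hz⟩)
    · exact Or.inl rfl
    · rw [add_comm w, add_comm w]
      exact Or.inr ⟨add_mem_add_univ hy w, add_mem_add_univ hz w⟩
    · exact Or.inr ⟨add_mem_add_univ hw y, add_mem_add_univ hx y⟩
    · exact Or.inr ⟨add_mem_add_univ hw y, add_mem_add_univ hx z⟩

theorem reesCon_mono {P Q : Set S} (h : P ⊆ Q + univ) : reesCon P ≤ reesCon Q := by
  have hPQ : P + univ ⊆ Q + univ := by
    rintro x ⟨p, hp, s, -, rfl⟩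
    exact add_mem_add_univ (h hp) s
  rintro x y (rfl | ⟨hx, hy⟩)
  exacts [Or.inl rfl, Or.inr ⟨hPQ hx, hPQ hy⟩]

theorem mem_add_univ_of_reesCon_insert_le {Q : Set S} {p x : S} (hp : p ∈ Q)
    (h : reesCon (insert x Q) ≤ reesCon Q) : x ∈ Q + univ := by
  have hQ : Q ⊆ Q + univ := subset_add_left Q (mem_univ 0)
  have hx : reesCon (insert x Q) x p := Or.inr
    ⟨subset_add_left _ (mem_univ 0) (mem_insert x Q),
      subset_add_left _ (mem_univ 0) (mem_insert_of_mem x hp)⟩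
  rcases h hx with rfl | ⟨hx, -⟩
  exacts [hQ hp, hx]

def kerAddLeft (a : S) : AddCon S where
  r x y := a + x = a + y
  iseqv := ⟨fun _ => rfl, Eq.symm, Eq.trans⟩
  add' {w x y z} h₁ h₂ := by
    calc a + (w + y) = a + w + y := (add_assoc a w y).symm
      _ = a + x + z := by rw [h₁, add_right_comm, h₂, add_right_comm]
      _ = a + (x + z) := add_assoc a x z

theorem kerAddLeft_ne_bot {a : S} (ha : ¬IsAddLeftRegular a) : kerAddLeft a ≠ ⊥ := by
  intro h
  exact ha fun x y hxy => (h ▸ hxy : (⊥ : AddCon S) x y)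

def unitsOrbitCon (H : AddSubgroup (AddUnits S)) : AddCon S where
  r x y := ∃ u ∈ H, x = y + u
  iseqv := by
    refine ⟨fun x => ⟨0, H.zero_mem, by simp⟩, ?_, ?_⟩
    · rintro x y ⟨u, hu, rfl⟩
      exact ⟨-u, H.neg_mem hu, by simp [add_assoc]⟩
    · rintro x y z ⟨u, hu, rfl⟩ ⟨v, hv, rfl⟩
      exact ⟨v + u, H.add_mem hv hu, by simp [add_assoc]⟩
  add' := by
    rintro w x y z ⟨u, hu, rfl⟩ ⟨v, hv, rfl⟩
    exact ⟨u + v, H.add_mem hu hv, by rw [AddUnits.val_add]; abel⟩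

theorem unitsOrbitCon_strictMono : StrictMono (unitsOrbitCon (S := S)) := by
  refine Monotone.strictMono_of_injective (fun H H' hle x y ⟨u, hu, hxy⟩ => ⟨u, hle hu, hxy⟩)
    fun H H' hHH' => AddSubgroup.ext fun u => ?_
  have key : ∀ K : AddSubgroup (AddUnits S), unitsOrbitCon K u 0 ↔ u ∈ K := fun K =>
    ⟨fun ⟨v, hv, huv⟩ => (AddUnits.ext (by simpa using huv) : u = v) ▸ hv,
      fun hu => ⟨u, hu, by simp⟩⟩
  rw [← key, ← key, hHH']

theorem AddCon.strictMono_comap_mk' (c : AddCon S) :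
    StrictMono fun d : AddCon c.Quotient => d.comap c.mk' (map_add c.mk') :=
  Monotone.strictMono_of_injective (fun _ _ hle _ _ h => hle h)
    (AddCon.comap_injective _ c.mk'_surjective _)

theorem exists_finset_forall_rel_mem_closure (c : AddCon S) [hc : AddMonoid.FG c.Quotient] :
    ∃ G : Finset S, ∀ x, ∃ y ∈ closure (G : Set S), c x y := by
  classical
  obtain ⟨T, hT⟩ := AddMonoid.fg_def.mp hc
  obtain ⟨G, -, rfl⟩ := Finset.subset_set_image_iff.mp
    (fun q _ => by simpa using c.mk'_surjective q : ↑T ⊆ c.mk' '' univ)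
  refine ⟨G, fun x => ?_⟩
  have hx : c.mk' x ∈ (closure (G : Set S)).map c.mk' := by
    rw [AddMonoidHom.map_mclosure, ← Finset.coe_image, hT]
    trivial
  obtain ⟨y, hy, hyx⟩ := hx
  exact ⟨y, hy, c.eq.mp hyx.symm⟩

theorem exists_finset_add_mem_closure_of_not_isAddLeftRegular
    (h : ∀ c : AddCon S, c ≠ ⊥ → AddMonoid.FG c.Quotient) {a : S} (ha : ¬IsAddLeftRegular a) :
    ∃ F : Finset S, ∀ s, a + s ∈ closure (F : Set S) := by
  classical
  have := h _ (kerAddLeft_ne_bot ha)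
  obtain ⟨G, hG⟩ := exists_finset_forall_rel_mem_closure (kerAddLeft a)
  refine ⟨insert a G, fun s => ?_⟩
  obtain ⟨w, hw, hsw⟩ := hG s
  rw [show a + s = a + w from hsw, Finset.coe_insert]
  exact add_mem (subset_closure (mem_insert a _)) (closure_mono (subset_insert a _) hw)

theorem exists_finset_forall_mem_closure_or_mem_add_univ
    (h : ∀ c : AddCon S, c ≠ ⊥ → AddMonoid.FG c.Quotient) {P : Set S} {x y : S}
    (hx : x ∈ P + univ) (hy : y ∈ P + univ) (hxy : x ≠ y) :
    ∃ G : Finset S, ∀ z, z ∈ closure (G : Set S) ∨ z ∈ P + univ := by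
  have hrel : reesCon P x y := Or.inr ⟨hx, hy⟩
  have := h (reesCon P) fun hbot => hxy (by rwa [hbot] at hrel)
  obtain ⟨G, hG⟩ := exists_finset_forall_rel_mem_closure (reesCon P)
  refine ⟨G, fun z => ?_⟩
  obtain ⟨w, hw, rfl | ⟨hz, -⟩⟩ := hG z
  exacts [Or.inl hw, Or.inr hz]

variable [WellFoundedGT (AddCon S)]

theorem exists_finset_subset_and_subset_add_univ (P : Set S) :
    ∃ B : Finset S, ↑B ⊆ P ∧ P ⊆ (B : Set S) + univ := by
  classical
  rcases P.eq_empty_or_nonempty with rfl | ⟨p, hp⟩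
  · exact ⟨∅, by simp, empty_subset _⟩
  obtain ⟨B, ⟨hBP, hpB⟩, hmax⟩ := (InvImage.wf (fun B : Finset S => reesCon (B : Set S))
    wellFounded_gt).has_min {B | ↑B ⊆ P ∧ p ∈ B} ⟨{p}, by simpa using hp⟩
  refine ⟨B, hBP, fun x hx => mem_add_univ_of_reesCon_insert_le (Finset.mem_coe.mpr hpB) ?_⟩
  have hle : reesCon (B : Set S) ≤ reesCon (insert x B : Finset S) :=
    reesCon_mono <| (Finset.coe_subset.mpr (Finset.subset_insert x B)).trans
      (subset_add_left _ (mem_univ 0))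
  have hnlt := hmax (insert x B) ⟨by simpa [insert_subset_iff] using ⟨hx, hBP⟩,
    Finset.mem_insert_of_mem hpB⟩
  rw [← Finset.coe_insert, ← eq_of_le_of_not_lt hle hnlt]

theorem exists_minimal_mem_add_univ {P : Set S} (hP : P.Nonempty) :
    ∃ a ∈ P, ∀ t ∈ P, a ∈ ({t} : Set S) + univ → t ∈ ({a} : Set S) + univ := by
  obtain ⟨a, ha, hmax⟩ := (InvImage.wf (fun a : S => reesCon {a}) wellFounded_gt).has_min P hP
  refine ⟨a, ha, fun t ht hat => mem_add_univ_of_reesCon_insert_le (mem_singleton a) ?_⟩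
  have hle : reesCon {a} ≤ reesCon {t} := reesCon_mono (singleton_subset_iff.mpr hat)
  calc reesCon (insert t {a}) ≤ reesCon {t} := reesCon_mono <|
        insert_subset (subset_add_left _ (mem_univ 0) rfl) (singleton_subset_iff.mpr hat)
    _ = reesCon {a} := (eq_of_le_of_not_lt hle (hmax t ht)).symm

theorem exists_finset_isAddUnit_subset_closure :
    ∃ F : Finset S, ∀ u : S, IsAddUnit u → u ∈ closure (F : Set S) := by
  have : WellFoundedGT (Submodule ℤ (AddUnits S)) :=
    (unitsOrbitCon_strictMono.comp AddSubgroup.toIntSubmodule.symm.strictMono).wellFoundedGT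
  have : Module.Finite ℤ (AddUnits S) := by
    have := isNoetherian_iff'.mpr this
    infer_instance
  have := AddGroup.fg_iff_addMonoid_fg.mp (Module.Finite.iff_addGroup_fg.mp this)
  obtain ⟨T, hT⟩ := AddMonoid.fg_def.mp this
  classical
  refine ⟨T.image (AddUnits.coeHom S), fun x hx => ?_⟩
  have hmem : hx.addUnit ∈ closure (T : Set (AddUnits S)) := hT ▸ mem_top _
  simpa [← AddMonoidHom.map_mclosure] using mem_map_of_mem (AddUnits.coeHom S) hmem

theorem exists_finset_subset_closure_of_forall_add_mem (P : Set S)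
    (hP : ∀ a ∈ P, ∃ F : Finset S, ∀ s, a + s ∈ closure (F : Set S)) :
    ∃ F : Finset S, P ⊆ closure (F : Set S) := by
  classical
  obtain ⟨B, hBP, hPB⟩ := exists_finset_subset_and_subset_add_univ P
  choose F hF using fun b : B => hP b (hBP b.2)
  refine ⟨B.attach.biUnion F, fun x hx => ?_⟩
  obtain ⟨b, hb, s, -, rfl⟩ := hPB hx
  exact closure_mono (by simpa using subset_iUnion (fun i => (F i : Set S)) ⟨b, hb⟩)
    (hF ⟨b, hb⟩ s)

theorem AddMonoid.fg_of_forall_fg_quotient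
    (h : ∀ c : AddCon S, c ≠ ⊥ → AddMonoid.FG c.Quotient) : AddMonoid.FG S := by
  classical
  by_contra hS
  have not_closure : ∀ F : Finset S, ((closure (F : Set S) : Set S)ᶜ).Nonempty := fun F => by
    by_contra! hF
    exact hS (AddMonoid.fg_def.mpr ⟨F, eq_top_iff.mpr fun x _ => by
      simp [← SetLike.mem_coe, compl_empty_iff.mp hF]⟩)
  obtain ⟨F₀, hunits⟩ := exists_finset_isAddUnit_subset_closure (S := S)
  obtain ⟨F₁, hnonreg⟩ := exists_finset_subset_closure_of_forall_add_mem {a | ¬IsAddLeftRegular a}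
    fun a ha => exists_finset_add_mem_closure_of_not_isAddLeftRegular h ha
  obtain ⟨a, ha⟩ := not_closure (F₀ ∪ F₁)
  have ha_reg : IsAddLeftRegular a := by
    by_contra hna
    exact ha (AddSubmonoid.closure_mono (by intro; simp +contextual) (hnonreg hna))
  have ha_ne : a + a ≠ a + 0 := fun haa => ha (ha_reg haa ▸ zero_mem _)
  obtain ⟨G, hG⟩ := exists_finset_forall_mem_closure_or_mem_add_univ h (P := {a})
    ⟨a, rfl, a, trivial, rfl⟩ ⟨a, rfl, 0, trivial, rfl⟩ ha_ne
  obtain ⟨b, hb, hmin⟩ := exists_minimal_mem_add_univ (not_closure (F₀ ∪ F₁ ∪ G ∪ {a}))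
  obtain ⟨t, rfl⟩ : ∃ t, b = a + t := by
    rcases hG b with hbG | ⟨_, rfl, t, -, rfl⟩
    · exact absurd (AddSubmonoid.closure_mono (by intro; simp +contextual) hbG) hb
    · exact ⟨t, rfl⟩
  have ht : t ∉ closure (↑(F₀ ∪ F₁ ∪ G ∪ {a}) : Set S) :=
    fun ht => hb (add_mem (subset_closure (by simp)) ht)
  obtain ⟨_, rfl, d, -, hd : a + t + d = t⟩ := hmin t ht ⟨t, rfl, a, trivial, add_comm t a⟩
  have hb_reg : IsAddLeftRegular (a + t) := by
    by_contra hn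
    exact hb (AddSubmonoid.closure_mono (by intro; simp +contextual) (hnonreg hn))
  have had : a + d = 0 := hb_reg <| calc
    a + t + (a + d) = a + (a + t + d) := by abel
    _ = a + t + 0 := by rw [hd, add_zero]
  exact ha (AddSubmonoid.closure_mono (by intro; simp +contextual)
    (hunits a (IsAddUnit.of_add_eq_zero d had)))

theorem AddMonoid.fg_quotient_of_wellFoundedGT (c : AddCon S) : AddMonoid.FG c.Quotient := by
  induction c using WellFoundedGT.induction with
  | _ c ih =>
    have : WellFoundedGT (AddCon c.Quotient) := c.strictMono_comap_mk'.wellFoundedGT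
    refine AddMonoid.fg_of_forall_fg_quotient fun d hd => ?_
    have hc : (⊥ : AddCon c.Quotient).comap c.mk' (map_add c.mk') = c :=
      AddCon.ext fun _ _ => c.eq
    have hlt : c < d.comap c.mk' (map_add c.mk') :=
      hc.symm.trans_lt (c.strictMono_comap_mk' (bot_lt_iff_ne_bot.mpr hd))
    have := ih _ hlt
    let e := d.comapQuotientEquivOfSurj c.mk' c.mk'_surjective
    exact AddMonoid.fg_of_surjective e.toAddMonoidHom e.surjective

theorem AddMonoid.fg_of_wellFoundedGT_addCon : AddMonoid.FG S :=
  AddMonoid.fg_of_forall_fg_quotient fun c _ => AddMonoid.fg_quotient_of_wellFoundedGT c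

end Monoid

namespace AddMonoidAlgebra

variable (R : Type*) {M : Type*} [AddCommMonoid M]

theorem strictMono_ker_mapDomainRingHom_mk' [Ring R] [Nontrivial R] :
    StrictMono fun c : AddCon M => RingHom.ker (mapDomainRingHom R c.mk') := by
  have key : ∀ (c : AddCon M) (x y : M),
      of' R M x - of' R M y ∈ RingHom.ker (mapDomainRingHom R c.mk') ↔ c x y := by
    intro c x y
    rw [RingHom.mem_ker, map_sub, sub_eq_zero]
    simpa using (single_left_injective (one_ne_zero (α := R))).eq_iff.trans c.eq
  refine Monotone.strictMono_of_injective (fun c d hcd f hf => ?_)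
    fun c d hcd => AddCon.ext fun x y => by rw [← key, hcd, key]
  have : d.mk' = (c.map d hcd).comp c.mk' := rfl
  rw [RingHom.mem_ker, this, mapDomainRingHom_comp, RingHom.comp_apply, hf, map_zero]

theorem wellFoundedGT_addCon [Ring R] [Nontrivial R] [IsNoetherianRing R[M]] :
    WellFoundedGT (AddCon M) :=
  have := isNoetherian_iff'.mp ‹IsNoetherianRing R[M]›
  (strictMono_ker_mapDomainRingHom_mk' R).wellFoundedGT

theorem _root_.isNoetherianRing_of_addMonoidAlgebra [CommRing R] [IsNoetherianRing R[M]] :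
    IsNoetherianRing R :=
  isNoetherianRing_of_surjective R[M] R (lift R R M 1).toRingHom
    fun r => ⟨algebraMap R R[M] r, (lift R R M 1).commutes r⟩

end AddMonoidAlgebra

/-- Let `R` be a (nonzero) commutative ring and `M` a commutative monoid.  The monoid
algebra `R[M]` is noetherian if and only if `R` is noetherian and `M` is finitely
generated. -/
theorem monoidAlgebra_noetherian_iff (R : Type*) [CommRing R] [Nontrivial R]
    (M : Type*) [AddCommMonoid M] :
    IsNoetherianRing (AddMonoidAlgebra R M) ↔ IsNoetherianRing R ∧ AddMonoid.FG M := by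
  refine ⟨fun _ => ?_, fun ⟨_, _⟩ => ?_⟩
  · have := AddMonoidAlgebra.wellFoundedGT_addCon R (M := M)
    exact ⟨isNoetherianRing_of_addMonoidAlgebra R (M := M),
      AddMonoid.fg_of_wellFoundedGT_addCon⟩
  · have := AddMonoidAlgebra.finiteType_of_fg R M
    exact Algebra.FiniteType.isNoetherianRing R (AddMonoidAlgebra R M)
end

section
/- Let R be a reduced commutative ring and M a torsionfree commutative monoid. Then the monoid algebra R[M] is reduced. -/
/-!
If `m + m` is a sum of two elements of the support of `a` only as `m + m`, the coefficient of
`a ^ 2` at `m + m` is `a m ^ 2`; in a reduced ring `a ^ 2 = 0` then forces `a m = 0`. Such an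
`m` exists in every finite nonempty `s ⊆ M`. Preorder `M` by `x ≼ y :⇔ x + u = n • y` for some
`n, u` (`ArchLE`), take a `≼`-minimal `m₀ ∈ s` and let `T` be the elements of `s` below `m₀`.
They are all equivalent to `m₀`, and within one archimedean class torsion-freeness yields
cancellation. Hence `T` embeds into the Grothendieck group of the monoid it generates, which is
finitely generated and torsion-free, so embeds into `ℤⁿ` and has unique sums. Finally
`u + v = m + m` with `m ∈ T` forces `u, v ≼ m₀`, i.e. `u, v ∈ T`.
-/

open Finset

section

variable {M : Type*} [AddCommMonoid M]

def ArchLE (x y : M) : Prop := ∃ (n : ℕ) (u : M), x + u = n • y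

theorem archLE_refl (x : M) : ArchLE x x := ⟨1, 0, by simp⟩

theorem archLE_add_right (x y : M) : ArchLE x (x + y) := ⟨1, y, by simp⟩

theorem ArchLE.trans {x y z : M} (hxy : ArchLE x y) (hyz : ArchLE y z) : ArchLE x z := by
  obtain ⟨n, u, hu⟩ := hxy
  obtain ⟨m, v, hv⟩ := hyz
  exact ⟨n * m, u + n • v, by rw [← add_assoc, hu, ← nsmul_add, hv, mul_nsmul']⟩

theorem ArchLE.add {x y z : M} (hx : ArchLE x z) (hy : ArchLE y z) : ArchLE (x + y) z := by
  obtain ⟨n, u, hu⟩ := hx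
  obtain ⟨m, v, hv⟩ := hy
  exact ⟨n + m, u + v, by rw [add_nsmul, ← hu, ← hv, add_add_add_comm]⟩

def archLEAddSubmonoid (y : M) : AddSubmonoid M where
  carrier := {x | ArchLE x y}
  zero_mem' := ⟨0, 0, by simp⟩
  add_mem' := ArchLE.add

theorem Finset.exists_archLE_minimal (s : Finset M) (hs : s.Nonempty) :
    ∃ m ∈ s, ∀ x ∈ s, ArchLE x m → ArchLE m x := by
  let : LE M := ⟨ArchLE⟩
  have : IsTrans M (· ≥ ·) := ⟨fun _ _ _ h₁ h₂ => ArchLE.trans h₂ h₁⟩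
  obtain ⟨m, hm⟩ := s.exists_minimal hs
  exact ⟨m, hm.prop, fun x hx => hm.le_of_le hx⟩

theorem nsmul_add_nsmul_of_add_nsmul_eq_succ_nsmul {a b : M} {n : ℕ}
    (hab : b + n • a = (n + 1) • a) (k : ℕ) : k • b + n • a = (n + k) • a := by
  induction k with
  | zero => simp
  | succ k ih =>
    rw [succ_nsmul', add_assoc, ih, add_nsmul, ← add_assoc, hab, ← add_nsmul]
    ring_nf

theorem ArchLE.add_right_cancel [IsAddTorsionFree M] {x y z : M} (hzx : ArchLE z x)
    (hzy : ArchLE z y) (h : x + z = y + z) : x = y := by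
  obtain ⟨n, u, hu⟩ := hzx
  obtain ⟨m, v, hv⟩ := hzy
  have hyx : y + n • x = (n + 1) • x := by
    rw [← hu, ← add_assoc, ← h, add_assoc, hu, succ_nsmul']
  have hxy : x + m • y = (m + 1) • y := by
    rw [← hv, ← add_assoc, h, add_assoc, hv, succ_nsmul']
  have key : (n + m + 1) • x = (n + m + 1) • y := by
    calc (n + m + 1) • x = (m + 1) • y + n • x := by
          rw [nsmul_add_nsmul_of_add_nsmul_eq_succ_nsmul hyx]; ring_nf
      _ = (n + 1) • x + m • y := by rw [succ_nsmul, add_assoc, hyx, add_comm]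
      _ = (n + m + 1) • y := by
          rw [nsmul_add_nsmul_of_add_nsmul_eq_succ_nsmul hxy]; ring_nf
  exact nsmul_right_injective (n + m).succ_ne_zero key

open Algebra in
theorem exists_uniqueAdd_self_of_cancel [IsAddTorsionFree M] {T : Finset M} (hT : T.Nonempty)
    (hcancel : ∀ x ∈ T, ∀ y ∈ T, ∀ c ∈ AddSubmonoid.closure (T : Set M),
      x + c = y + c → x = y) :
    ∃ m ∈ T, UniqueAdd T T m m := by
  classical
  let N := AddSubmonoid.closure (T : Set M)
  have : IsAddTorsionFree N := Subtype.val_injective.isAddTorsionFree N.subtype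
  let ι (x : T) : GrothendieckAddGroup N :=
    GrothendieckAddGroup.of ⟨x, AddSubmonoid.subset_closure x.2⟩
  -- `N` need not be cancellative (it may contain idempotents), but `of` is injective on `T`.
  have hι : Function.Injective ι := by
    intro x y h
    obtain ⟨⟨c, _⟩, hc⟩ := (AddLocalization.addMonoidOf ⊤).eq_iff_exists.1 h
    exact Subtype.ext <|
      hcancel x x.2 y y.2 c c.2 (by simpa [add_comm] using congrArg Subtype.val hc)
  have hne : (univ.image ι).Nonempty := hT.attach.image ι
  obtain ⟨g, hg, g', hg', huniq⟩ := UniqueSums.uniqueAdd_of_nonempty hne hne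
  obtain ⟨m, -, rfl⟩ := mem_image.1 hg
  obtain rfl : g' = ι m := (huniq hg' hg (add_comm _ _)).1
  refine ⟨m, m.2, fun u v hu hv huv => ?_⟩
  have hsum : ι ⟨u, hu⟩ + ι ⟨v, hv⟩ = ι m + ι m := by
    simp only [ι, ← map_add]
    exact congrArg _ (Subtype.ext huv)
  obtain ⟨hum, hvm⟩ :=
    huniq (mem_image_of_mem ι (mem_univ _)) (mem_image_of_mem ι (mem_univ _)) hsum
  exact ⟨congrArg Subtype.val (hι hum), congrArg Subtype.val (hι hvm)⟩

theorem Finset.exists_uniqueAdd_self [IsAddTorsionFree M] (s : Finset M) (hs : s.Nonempty) :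
    ∃ m ∈ s, UniqueAdd s s m m := by
  classical
  obtain ⟨m₀, hm₀, hmin⟩ := s.exists_archLE_minimal hs
  let T := s.filter (ArchLE · m₀)
  have hT_ge (x) (hx : x ∈ T) : ArchLE m₀ x := hmin x (mem_filter.1 hx).1 (mem_filter.1 hx).2
  have hclosure : AddSubmonoid.closure (T : Set M) ≤ archLEAddSubmonoid m₀ :=
    AddSubmonoid.closure_le.2 fun x hx => (mem_filter.1 hx).2
  obtain ⟨m, hmT, huniq⟩ := exists_uniqueAdd_self_of_cancel (T := T)
    ⟨m₀, mem_filter.2 ⟨hm₀, archLE_refl m₀⟩⟩ fun x hx y hy c hc =>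
      ArchLE.add_right_cancel (ArchLE.trans (hclosure hc) (hT_ge x hx))
        (ArchLE.trans (hclosure hc) (hT_ge y hy))
  have hmm : ArchLE (m + m) m₀ := (mem_filter.1 hmT).2.add (mem_filter.1 hmT).2
  refine ⟨m, (mem_filter.1 hmT).1, fun u v hu hv huv => huniq ?_ ?_ huv⟩
  · rw [← huv] at hmm
    exact mem_filter.2 ⟨hu, (archLE_add_right u v).trans hmm⟩
  · rw [← huv, add_comm] at hmm
    exact mem_filter.2 ⟨hv, (archLE_add_right v u).trans hmm⟩

end

/-- Let `R` be a reduced commutative ring and `M` a torsionfree commutative monoid.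
Then the monoid algebra `R[M]` is reduced. -/
theorem monoidAlgebra_isReduced (R : Type*) [CommRing R] [IsReduced R]
    (M : Type*) [AddCommMonoid M]
    (htf : ∀ (r : ℕ) (m n : M), r ≠ 0 → r • m = r • n → m = n) :
    IsReduced (AddMonoidAlgebra R M) := by
  have : IsAddTorsionFree M := ⟨fun r hr m n h => htf r m n hr h⟩
  refine (isReduced_iff_pow_one_lt 2 one_lt_two).2 fun a ha => ?_
  by_contra ha0
  obtain ⟨m, hm, huniq⟩ := a.coeff.support.exists_uniqueAdd_self
    (Finsupp.support_nonempty_iff.2 (mt AddMonoidAlgebra.coeff_eq_zero.1 ha0))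
  have hsq : a.coeff m ^ 2 = 0 := by
    rw [sq, ← AddMonoidAlgebra.coeff_mul_add_of_uniqueAdd huniq, ← sq, ha]
    rfl
  exact Finsupp.mem_support_iff.1 hm (IsReduced.eq_zero _ ⟨2, hsq⟩)
end

section
/- Let R be a commutative ring and write R[T] for the polynomial ring R[ℕ]. If the localizations R[T]_T and R[T]_{T−1} are both catenary rings, then R[T] is catenary. -/
/-- A chain of primes (an `LTSeries` in the prime spectrum) is saturated if no prime
can be inserted strictly between two consecutive members. -/
def IsSaturatedChain {A : Type*} [CommRing A] (c : LTSeries (PrimeSpectrum A)) : Prop :=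
  ∀ i : Fin c.length, ∀ z : PrimeSpectrum A,
    ¬(c.toFun i.castSucc < z ∧ z < c.toFun i.succ)

/-- A commutative ring is catenary if any two saturated chains of primes with the same
endpoints have the same length. -/
def IsCatenary (A : Type*) [CommRing A] : Prop :=
  ∀ c d : LTSeries (PrimeSpectrum A),
    c.head = d.head → c.last = d.last →
    IsSaturatedChain c → IsSaturatedChain d → c.length = d.length

noncomputable def awayIso {A : Type*} [CommRing A] (f : A) :
    PrimeSpectrum (Localization.Away f) ≃o {p : PrimeSpectrum A // f ∉ p.asIdeal} := by
  let e := IsLocalization.orderIsoOfPrime (Submonoid.powers f) (Localization.Away f)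
  exact
  { toFun := fun p => ⟨⟨(e ⟨p.asIdeal, p.2⟩).1, (e ⟨p.asIdeal, p.2⟩).2.1⟩,
      (Ideal.disjoint_powers_iff_notMem f (e ⟨p.asIdeal, p.2⟩).2.1.isRadical).mp
        (e ⟨p.asIdeal, p.2⟩).2.2⟩
    invFun := fun p => ⟨(e.symm ⟨p.1.asIdeal, p.1.2,
      (Ideal.disjoint_powers_iff_notMem f p.1.2.isRadical).mpr p.2⟩).1,
      (e.symm ⟨p.1.asIdeal, p.1.2,
      (Ideal.disjoint_powers_iff_notMem f p.1.2.isRadical).mpr p.2⟩).2⟩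
    left_inv := fun p => by
      ext1
      show (e.symm ⟨(e ⟨p.asIdeal, p.2⟩).1, _⟩).1 = p.asIdeal
      have harg : (⟨(e ⟨p.asIdeal, p.2⟩).1, (e ⟨p.asIdeal, p.2⟩).2.1,
          (e ⟨p.asIdeal, p.2⟩).2.2⟩ : {p : Ideal A // p.IsPrime ∧
            Disjoint (Submonoid.powers f : Set A) ↑p}) = e ⟨p.asIdeal, p.2⟩ :=
        Subtype.ext rfl
      rw [harg, e.symm_apply_apply]
    right_inv := fun p => by
      ext1; ext1
      show (e ⟨(e.symm _).1, (e.symm _).2⟩).1 = p.1.asIdeal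
      rw [show (⟨(e.symm _).1, (e.symm _).2⟩ : {p : Ideal (Localization.Away f) //
        p.IsPrime}) = e.symm ⟨p.1.asIdeal, p.1.2,
        (Ideal.disjoint_powers_iff_notMem f p.1.2.isRadical).mpr p.2⟩ from rfl,
        e.apply_symm_apply]
    map_rel_iff' := by
      intro p q
      constructor
      · intro h
        exact e.le_iff_le.mp (by exact h)
      · intro h
        exact e.le_iff_le.mpr h }

lemma aux_catenary {A : Type*} [CommRing A] (f : A)
    (h : IsCatenary (Localization.Away f))
    (c d : LTSeries (PrimeSpectrum A)) (hh : c.head = d.head) (hl : c.last = d.last)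
    (hc : IsSaturatedChain c) (hd : IsSaturatedChain d)
    (hf : f ∉ c.last.asIdeal) : c.length = d.length := by
  let e := awayIso (A := A) f
  have hmemc : ∀ i, f ∉ (c.toFun i).asIdeal := fun i hi =>
    hf (c.monotone (Fin.le_last i) hi)
  have hmemd : ∀ i, f ∉ (d.toFun i).asIdeal := fun i hi =>
    hf (hl ▸ d.monotone (Fin.le_last i) hi)
  let lift : ∀ (u : LTSeries (PrimeSpectrum A)), (∀ i, f ∉ (u.toFun i).asIdeal) →
      LTSeries (PrimeSpectrum (Localization.Away f)) := fun u hu =>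
    { length := u.length
      toFun := fun i => e.symm ⟨u.toFun i, hu i⟩
      step := fun i => e.symm.lt_iff_lt.mpr (by exact u.step i) }
  have key : ∀ (u : LTSeries (PrimeSpectrum A)) (hu : ∀ i, f ∉ (u.toFun i).asIdeal),
      IsSaturatedChain u → IsSaturatedChain (lift u hu) := by
    intro u hu hsat i z ⟨h1, h2⟩
    refine hsat i (e z).1 ⟨?_, ?_⟩
    · have := e.symm.lt_iff_lt.mp (by simpa using h1 : (lift u hu).toFun i.castSucc < e.symm (e z))
      exact Subtype.coe_lt_coe.mpr this
    · have := e.symm.lt_iff_lt.mp (by simpa using h2 : e.symm (e z) < (lift u hu).toFun i.succ)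
      exact Subtype.coe_lt_coe.mpr this
  have := h (lift c hmemc) (lift d hmemd)
    (by
      show e.symm ⟨c.head, _⟩ = e.symm ⟨d.head, _⟩
      congr 1
      exact Subtype.ext hh)
    (by
      show e.symm ⟨c.last, _⟩ = e.symm ⟨d.last, _⟩
      congr 1
      exact Subtype.ext hl)
    (key c hmemc hc) (key d hmemd hd)
  exact this


/-- Let `R` be a commutative ring and write `R[T]` for the polynomial ring in one
variable.  If the localizations `R[T]_T` and `R[T]_{T-1}` are both catenary, then
`R[T]` is catenary. -/
theorem polynomial_catenary_of_localizations (R : Type*) [CommRing R]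
    (h₁ : IsCatenary (Localization.Away (Polynomial.X : Polynomial R)))
    (h₂ : IsCatenary (Localization.Away ((Polynomial.X : Polynomial R) - 1))) :
    IsCatenary (Polynomial R) := by
  intro c d hh hl hc hd
  by_cases hX : (Polynomial.X : Polynomial R) ∈ c.last.asIdeal
  · have hX1 : (Polynomial.X : Polynomial R) - 1 ∉ c.last.asIdeal := by
      intro h1
      have : (1 : Polynomial R) ∈ c.last.asIdeal := by
        have := c.last.asIdeal.sub_mem hX h1
        simpa using this
      exact c.last.2.ne_top (c.last.asIdeal.eq_top_iff_one.mpr this)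
    exact aux_catenary _ h₂ c d hh hl hc hd hX1
  · exact aux_catenary _ h₁ c d hh hl hc hd hX
end

section
/- Let R be a commutative ring, M a commutative monoid, and S ⊆ R[M] a subset. Set T = S ∩ R and U the image of S in (T⁻¹R)[M] under the map induced by localization. Then the R[M]-algebras S⁻¹(R[M]) and U⁻¹((T⁻¹R)[M]) are canonically isomorphic. -/
/-!
The image of `T` in `R[M]` lies in `S`, so `S⁻¹(R[M])` can be computed in two steps: first
invert `T`, then the image of `S`. Inverting `T ⊆ R` inside `R[M]` is a base change along
`R → T⁻¹R`, and monoid algebras commute with base change, so the first step yields `(T⁻¹R)[M]`;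
the second step inverts `U`, the image of `S` there.
-/

/-- The ring morphism `R[M] → R'[M]` induced on monoid algebras by a ring morphism
`f : R → R'` on coefficients. -/
noncomputable def AddMonoidAlgebra.mapRangeRingHom' {R R' : Type*} [CommSemiring R]
    [CommSemiring R'] (M : Type*) [AddCommMonoid M] (f : R →+* R') :
    AddMonoidAlgebra R M →+* AddMonoidAlgebra R' M :=
  AddMonoidAlgebra.liftNCRingHom ((AddMonoidAlgebra.singleZeroRingHom).comp f)
    (AddMonoidAlgebra.of R' M) (fun _ _ => Commute.all _ _)

theorem AddMonoidAlgebra.mapRangeRingHom'_eq_mapRingHom {R R' : Type*} [CommSemiring R]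
    [CommSemiring R'] (M : Type*) [AddCommMonoid M] (f : R →+* R') :
    mapRangeRingHom' M f = mapRingHom M f := by
  ext <;> simp [mapRangeRingHom', singleZeroRingHom]

open scoped AlgebraMonoidAlgebra in
theorem AddMonoidAlgebra.isLocalization {R : Type*} [CommSemiring R] (P : Submonoid R)
    (A : Type*) [CommSemiring A] [Algebra R A] [IsLocalization P A] (M : Type*)
    [AddCommMonoid M] :
    IsLocalization (P.map (algebraMap R (AddMonoidAlgebra R M))) (AddMonoidAlgebra A M) :=
  isLocalizedModule_iff_isLocalization.mp <| (isLocalizedModule_iff_isBaseChange P A _).mpr <|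
    .of_equiv (scalarTensorEquiv R A).toLinearEquiv fun _ ↦ by ext; simp

theorem IsLocalization.localization_localization_of_le {A C B : Type*} [CommSemiring A]
    [CommSemiring C] [CommSemiring B] [Algebra C B] (ψ : A →+* C) {P Q : Submonoid A}
    (hPQ : P ≤ Q) (hC : letI := ψ.toAlgebra; IsLocalization P C)
    [IsLocalization (Q.map ψ) B] :
    letI := ((algebraMap C B).comp ψ).toAlgebra; IsLocalization Q B := by
  let := ψ.toAlgebra
  let := ((algebraMap C B).comp ψ).toAlgebra
  have : IsScalarTower A C B := .of_algebraMap_eq' rfl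
  -- `B` is the localization of `A` at `localizationLocalizationSubmodule P (Q.map ψ) ⊇ Q`,
  -- each element of which divides an element of `Q`.
  refine (iff_of_le_of_exists_dvd Q (localizationLocalizationSubmodule P (Q.map ψ))
    (fun q hq ↦ ?_) fun n hn ↦ ?_).mpr (localization_localization_isLocalization P _ B)
  · exact mem_localizationLocalizationSubmodule.mpr
      ⟨⟨_, q, hq, rfl⟩, 1, by simp [RingHom.algebraMap_toAlgebra]⟩
  · obtain ⟨⟨_, q, hq, rfl⟩, p, h⟩ := mem_localizationLocalizationSubmodule.mp hn
    have h' : algebraMap A C n = algebraMap A C (q * p) := by rw [map_mul]; exact h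
    obtain ⟨c, hc⟩ := (eq_iff_exists P C).mp h'
    exact ⟨c * (q * p), Q.mul_mem (hPQ c.2) (Q.mul_mem hq (hPQ p.2)), hc ▸ dvd_mul_left n c⟩

/-- Let `R` be a commutative ring, `M` a commutative monoid and `S ⊆ R[M]` a subset.
Set `T = S ∩ R` (elements of `R` whose canonical image lies in `S`) and let `U` be
the image of `S` in `(T⁻¹R)[M]` under the map induced by the localization `R → T⁻¹R`.
Then the `R[M]`-algebra `U⁻¹((T⁻¹R)[M])` is a localization of `R[M]` at (the
multiplicative set generated by) `S`, i.e. the `R[M]`-algebras `S⁻¹(R[M])` and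
`U⁻¹((T⁻¹R)[M])` are canonically isomorphic. -/
theorem monoidAlgebra_localization_two_step (R : Type*) [CommRing R]
    (M : Type*) [AddCommMonoid M] (S : Set (AddMonoidAlgebra R M)) :
    letI T : Set R := (algebraMap R (AddMonoidAlgebra R M)) ⁻¹' S
    letI TR := Localization (Submonoid.closure T)
    letI ψ : AddMonoidAlgebra R M →+* AddMonoidAlgebra TR M :=
      AddMonoidAlgebra.mapRangeRingHom' M (algebraMap R TR)
    letI U : Set (AddMonoidAlgebra TR M) := ψ '' S
    letI B := Localization (Submonoid.closure U)
    letI : Algebra (AddMonoidAlgebra R M) B :=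
      ((algebraMap (AddMonoidAlgebra TR M) B).comp ψ).toAlgebra
    IsLocalization (Submonoid.closure S) B := by
  rw [AddMonoidAlgebra.mapRangeRingHom'_eq_mapRingHom, ← MonoidHom.map_mclosure]
  refine IsLocalization.localization_localization_of_le _ ?_
    (AddMonoidAlgebra.isLocalization (Submonoid.closure (algebraMap R _ ⁻¹' S)) _ M)
  exact Submonoid.map_le_iff_le_comap.mpr <| Submonoid.closure_le.mpr fun _ hx ↦
    Submonoid.subset_closure hx
end

section
/- Let R be a nonzero commutative ring and M a nontrivial finitely generated cancellable torsionfree commutative monoid, so that the monoid algebra over any field is a domain. Then the morphism Spec(R[M]) → Spec(R) is surjective with irreducible fibers, and it induces mutually inverse bijections between the irreducible components of Spec(R) and those of Spec(R[M]), given by taking preimage and image respectively. -/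
/-!
A finitely generated, cancellative, torsion-free commutative monoid has unique sums, so `(R ⧸ p)[M]`
is a domain for every prime `p` of `R`. Hence the extended ideal `p R[M]`, the kernel of
`R[M] → (R ⧸ p)[M]`, is prime, and it lies over `p`. So `p ↦ p R[M]` is a left adjoint and a section
of `comap` on prime spectra (a Galois coinsertion): `p R[M]` is the least point of the fibre over `p`.
In a prime spectrum the closure of a point `x` is `Ici x` and the irreducible components are the
`Ici x` with `x` minimal, so the rest is order theory: every fibre has a generic point, and the
coinsertion matches the minimal points on both sides.
-/

open AddMonoidAlgebra

namespace GaloisConnection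

variable {α β : Type*} {l : α → β} {u : β → α}

theorem u_preimage_Ici [Preorder α] [Preorder β] (gc : GaloisConnection l u) (a : α) :
    u ⁻¹' Set.Ici a = Set.Ici (l a) :=
  Set.ext fun _ => (gc _ _).symm

theorem l_u_eq_of_isMin [Preorder α] [PartialOrder β] (gc : GaloisConnection l u) {b : β}
    (hb : IsMin b) : l (u b) = b :=
  (gc.l_u_le b).antisymm (hb (gc.l_u_le b))

end GaloisConnection

namespace GaloisCoinsertion

variable {α β : Type*} [PartialOrder α] {l : α → β} {u : β → α}

theorem u_image_Ici_l [Preorder β] (gi : GaloisCoinsertion l u) (a : α) :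
    u '' Set.Ici (l a) = Set.Ici a := by
  ext a'
  constructor
  · rintro ⟨b, hb, rfl⟩
    exact gi.u_l_eq a ▸ gi.gc.monotone_u hb
  · intro ha'
    exact ⟨l a', gi.gc.monotone_l ha', gi.u_l_eq a'⟩

theorem isMin_l_iff [Preorder β] (gi : GaloisCoinsertion l u) {a : α} :
    IsMin (l a) ↔ IsMin a := by
  refine ⟨fun h a' ha' => ?_, fun h b hb => gi.gc.l_le (h ?_)⟩
  · simpa only [gi.u_l_eq] using gi.gc.monotone_u (h (gi.gc.monotone_l ha'))
  · simpa only [gi.u_l_eq] using gi.gc.monotone_u hb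

theorem isMin_u_of_isMin [PartialOrder β] (gi : GaloisCoinsertion l u) {b : β} (hb : IsMin b) :
    IsMin (u b) :=
  gi.isMin_l_iff.1 (by rwa [gi.gc.l_u_eq_of_isMin hb])

end GaloisCoinsertion

namespace PrimeSpectrum

variable {R S : Type*} [CommSemiring R] [CommSemiring S]

theorem closure_singleton_eq_Ici (x : PrimeSpectrum R) : closure {x} = Set.Ici x := by
  ext y
  rw [← specializes_iff_mem_closure, ← le_iff_specializes, Set.mem_Ici]

theorem mem_irreducibleComponents_iff {Z : Set (PrimeSpectrum R)} :
    Z ∈ irreducibleComponents (PrimeSpectrum R) ↔ ∃ x, IsMin x ∧ Z = Set.Ici x := by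
  rw [← zeroLocus_minimalPrimes]
  constructor
  · rintro ⟨p, hp, rfl⟩
    exact ⟨⟨p, hp.1.1⟩, isMin_iff.2 hp, by rw [← closure_singleton_eq_Ici, closure_singleton]; rfl⟩
  · rintro ⟨x, hx, rfl⟩
    exact ⟨x.asIdeal, isMin_iff.1 hx, by rw [← closure_singleton_eq_Ici, closure_singleton]; rfl⟩

section GaloisCoinsertion

variable {σ : PrimeSpectrum R → PrimeSpectrum S} {f : PrimeSpectrum S → PrimeSpectrum R}

theorem isIrreducible_preimage_singleton_of_gci (gi : GaloisCoinsertion σ f)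
    (p : PrimeSpectrum R) : IsIrreducible (f ⁻¹' {p}) := by
  have hfibre : closure (f ⁻¹' {p}) = closure {σ p} := by
    refine (closure_minimal ?_ isClosed_closure).antisymm (closure_mono ?_)
    · rw [closure_singleton_eq_Ici, ← gi.gc.u_preimage_Ici]
      exact Set.preimage_mono (Set.singleton_subset_iff.2 (Set.mem_Ici.2 le_rfl))
    · simp [gi.u_l_eq]
  rw [← isIrreducible_iff_closure, hfibre, isIrreducible_iff_closure]
  exact isIrreducible_singleton

theorem preimage_mem_irreducibleComponents_of_gci (gi : GaloisCoinsertion σ f)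
    {Z : Set (PrimeSpectrum R)} (hZ : Z ∈ irreducibleComponents (PrimeSpectrum R)) :
    f ⁻¹' Z ∈ irreducibleComponents (PrimeSpectrum S) := by
  obtain ⟨p, hp, rfl⟩ := mem_irreducibleComponents_iff.1 hZ
  exact mem_irreducibleComponents_iff.2 ⟨σ p, gi.isMin_l_iff.2 hp, gi.gc.u_preimage_Ici p⟩

theorem image_mem_irreducibleComponents_of_gci (gi : GaloisCoinsertion σ f)
    {Y : Set (PrimeSpectrum S)} (hY : Y ∈ irreducibleComponents (PrimeSpectrum S)) :
    f '' Y ∈ irreducibleComponents (PrimeSpectrum R) := by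
  obtain ⟨q, hq, rfl⟩ := mem_irreducibleComponents_iff.1 hY
  rw [← gi.gc.l_u_eq_of_isMin hq, gi.u_image_Ici_l]
  exact mem_irreducibleComponents_iff.2 ⟨f q, gi.isMin_u_of_isMin hq, rfl⟩

theorem preimage_image_eq_of_gci (gi : GaloisCoinsertion σ f)
    {Y : Set (PrimeSpectrum S)} (hY : Y ∈ irreducibleComponents (PrimeSpectrum S)) :
    f ⁻¹' (f '' Y) = Y := by
  obtain ⟨q, hq, rfl⟩ := mem_irreducibleComponents_iff.1 hY
  rw [← gi.gc.l_u_eq_of_isMin hq, gi.u_image_Ici_l, gi.gc.u_preimage_Ici]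

end GaloisCoinsertion

end PrimeSpectrum

namespace AddMonoidAlgebra

section Semiring

variable {R S M : Type*} [CommSemiring R] [Semiring S] [AddMonoid M]

theorem mem_map_algebraMap_of_forall_coeff_mem {I : Ideal R} {f : R[M]}
    (hf : ∀ m, f.coeff m ∈ I) : f ∈ I.map (algebraMap R R[M]) := by
  rw [← f.sum_coeff_single]
  refine Ideal.sum_mem _ fun m _ => ?_
  have hsingle : single m (f.coeff m) = single m 1 * algebraMap R R[M] (f.coeff m) := by
    simp [coe_algebraMap, single_mul_single]
  rw [hsingle]
  exact Ideal.mul_mem_left _ _ (Ideal.mem_map_of_mem _ (hf m))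

theorem ker_mapRingHom (φ : R →+* S) :
    RingHom.ker (mapRingHom M φ) = (RingHom.ker φ).map (algebraMap R R[M]) := by
  refine le_antisymm (fun f hf => mem_map_algebraMap_of_forall_coeff_mem fun m => ?_)
    (Ideal.map_le_iff_le_comap.2 fun r hr => ?_)
  · rw [RingHom.mem_ker, ← coeff_mapRingHom, RingHom.mem_ker.1 hf, coeff_zero, Finsupp.coe_zero,
      Pi.zero_apply]
  · simp [RingHom.mem_ker, coe_algebraMap, RingHom.mem_ker.1 hr]

end Semiring

section CommRing

variable {R M : Type*} [CommRing R] [AddCommMonoid M]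

theorem comap_map_algebraMap (I : Ideal R) :
    (I.map (algebraMap R R[M])).comap (algebraMap R R[M]) = I := by
  ext r
  rw [Ideal.mem_comap, ← Ideal.mk_ker (I := I), ← ker_mapRingHom]
  simp [RingHom.mem_ker, coe_algebraMap, Ideal.Quotient.eq_zero_iff_mem]

variable [UniqueSums M]

theorem isPrime_map_algebraMap (p : Ideal R) [p.IsPrime] :
    (p.map (algebraMap R R[M])).IsPrime := by
  rw [← Ideal.mk_ker (I := p), ← ker_mapRingHom]
  exact RingHom.ker_isPrime _

variable (R M)

noncomputable def extendedPrime (p : PrimeSpectrum R) : PrimeSpectrum R[M] :=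
  ⟨p.asIdeal.map (algebraMap R R[M]), isPrime_map_algebraMap p.asIdeal⟩

noncomputable def gciExtendedPrimeComap :
    GaloisCoinsertion (extendedPrime R M) (PrimeSpectrum.comap (algebraMap R R[M])) :=
  GaloisConnection.toGaloisCoinsertion (fun _ _ => Ideal.map_le_iff_le_comap)
    (fun p => (comap_map_algebraMap p.asIdeal).le)

end CommRing

end AddMonoidAlgebra

theorem monoidAlgebra_spec_irreducibleComponents_general
    (R : Type*) [CommRing R]
    (M : Type*) [AddCancelCommMonoid M] (hfg : AddMonoid.FG M)
    (htf : ∀ (r : ℕ) (m n : M), r ≠ 0 → r • m = r • n → m = n) :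
    letI f := PrimeSpectrum.comap (algebraMap R (AddMonoidAlgebra R M))
    Function.Surjective f ∧
    (∀ p : PrimeSpectrum R, IsIrreducible (f ⁻¹' {p})) ∧
    (∀ Z ∈ irreducibleComponents (PrimeSpectrum R),
        f ⁻¹' Z ∈ irreducibleComponents (PrimeSpectrum (AddMonoidAlgebra R M))) ∧
    (∀ Y ∈ irreducibleComponents (PrimeSpectrum (AddMonoidAlgebra R M)),
        f '' Y ∈ irreducibleComponents (PrimeSpectrum R)) ∧
    (∀ Z ∈ irreducibleComponents (PrimeSpectrum R), f '' (f ⁻¹' Z) = Z) ∧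
    (∀ Y ∈ irreducibleComponents (PrimeSpectrum (AddMonoidAlgebra R M)),
        f ⁻¹' (f '' Y) = Y) := by
  have : AddMonoid.FG M := hfg
  -- with these instances `AffineAddMonoid.to_twoUniqueSums` provides `UniqueSums M`
  have : IsAddTorsionFree M := ⟨fun r hr m n h => htf r m n hr h⟩
  have gi := gciExtendedPrimeComap R M
  exact ⟨gi.u_surjective, PrimeSpectrum.isIrreducible_preimage_singleton_of_gci gi,
    fun _ => PrimeSpectrum.preimage_mem_irreducibleComponents_of_gci gi,
    fun _ => PrimeSpectrum.image_mem_irreducibleComponents_of_gci gi,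
    fun Z _ => Set.image_preimage_eq Z gi.u_surjective,
    fun _ => PrimeSpectrum.preimage_image_eq_of_gci gi⟩

/-- Let `R` be a nonzero commutative ring and `M` a nontrivial finitely generated
cancellable torsionfree commutative monoid (so that the monoid algebra over any field
is a domain).  Then the map `Spec R[M] → Spec R` is surjective with irreducible
fibres, and taking preimages and images under it induces mutually inverse bijections
between the irreducible components of `Spec R` and those of `Spec R[M]`. -/
theorem monoidAlgebra_spec_irreducibleComponents
    (R : Type*) [CommRing R] [Nontrivial R]
    (M : Type*) [AddCancelCommMonoid M] [Nontrivial M] (hfg : AddMonoid.FG M)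
    (htf : ∀ (r : ℕ) (m n : M), r ≠ 0 → r • m = r • n → m = n) :
    letI f := PrimeSpectrum.comap (algebraMap R (AddMonoidAlgebra R M))
    Function.Surjective f ∧
    (∀ p : PrimeSpectrum R, IsIrreducible (f ⁻¹' {p})) ∧
    (∀ Z ∈ irreducibleComponents (PrimeSpectrum R),
        f ⁻¹' Z ∈ irreducibleComponents (PrimeSpectrum (AddMonoidAlgebra R M))) ∧
    (∀ Y ∈ irreducibleComponents (PrimeSpectrum (AddMonoidAlgebra R M)),
        f '' Y ∈ irreducibleComponents (PrimeSpectrum R)) ∧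
    (∀ Z ∈ irreducibleComponents (PrimeSpectrum R), f '' (f ⁻¹' Z) = Z) ∧
    (∀ Y ∈ irreducibleComponents (PrimeSpectrum (AddMonoidAlgebra R M)),
        f ⁻¹' (f '' Y) = Y) :=
  monoidAlgebra_spec_irreducibleComponents_general R M hfg htf
end
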